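/- arXiv:2103.10922 — 10 statements merged into one kernel-verified Lean document; each statement's English description precedes it below -/
import Mathlib

section
/- Let $n\in\mathbb{N}_0$ and $q_0<q_1<\dots<q_{n+1}$ be real numbers, and let $f:[q_0,q_{n+1}]\to\mathbb{R}$ be continuous with $f(x)=A_ix+B_i$ on each $[q_i,q_{i+1}]$ and $\int_{q_i}^{q_{i+1}}(f(y)-y)\,dy=0$ for all $i\in\{0,\dots,n\}$. Then for all $i$: $A_i-1=(-1)^i\frac{q_1-q_0}{q_{i+1}-q_i}(A_0-1)$ and $B_i=(-1)^{i+1}\frac{q_{i+1}+q_i}{2}\cdot\frac{q_1-q_0}{q_{i+1}-q_i}(A_0-1)$. -/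
/-
On each piece the condition ∫ (f y - y) dy = 0 pins the intercept to the slope:
B_i = -(A_i - 1)(q_i + q_{i+1})/2, i.e. f(y) - y vanishes at the midpoint of the piece.
Substituting this into continuity at the junction q_{i+1} gives
(A_{i+1} - 1)(q_{i+2} - q_{i+1}) = -(A_i - 1)(q_{i+1} - q_i), so the quantity
(A_i - 1)(q_{i+1} - q_i) only alternates in sign along the partition.
-/

theorem intervalIntegral.integral_mul_add_sub_id (a b C D : ℝ) :
    ∫ y in a..b, (C * y + D - y) = (C - 1) * (b ^ 2 - a ^ 2) / 2 + D * (b - a) := by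
  have h : (fun y : ℝ => C * y + D - y) = fun y => (C - 1) * y + D := by
    funext y; ring
  rw [h, intervalIntegral.integral_add ((intervalIntegrable_id).const_mul _)
      intervalIntegrable_const, intervalIntegral.integral_const_mul, integral_id,
      intervalIntegral.integral_const, smul_eq_mul]
  ring

theorem intercept_eq_of_integral_mul_add_sub_id_eq_zero {a b C D : ℝ} (hab : a ≠ b)
    (h : ∫ y in a..b, (C * y + D - y) = 0) : D = -(C - 1) * (a + b) / 2 := by
  rw [intervalIntegral.integral_mul_add_sub_id] at h
  have hba : b - a ≠ 0 := sub_ne_zero.mpr hab.symm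
  apply mul_right_cancel₀ hba
  linear_combination h

theorem slope_sub_one_mul_length_eq_neg {a b c C D C' D' : ℝ} (hab : a ≠ b) (hbc : b ≠ c)
    (h₁ : ∫ y in a..b, (C * y + D - y) = 0) (h₂ : ∫ y in b..c, (C' * y + D' - y) = 0)
    (hjoin : C * b + D = C' * b + D') :
    (C' - 1) * (c - b) = -((C - 1) * (b - a)) := by
  rw [intercept_eq_of_integral_mul_add_sub_id_eq_zero hab h₁,
    intercept_eq_of_integral_mul_add_sub_id_eq_zero hbc h₂] at hjoin
  linear_combination 2 * hjoin

theorem eq_neg_one_pow_mul_of_succ_eq_neg {R : Type*} [Ring R] {u : ℕ → R} {n : ℕ}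
    (h : ∀ i < n, u (i + 1) = -u i) : ∀ i ≤ n, u i = (-1) ^ i * u 0 := by
  intro i
  induction i with
  | zero => simp
  | succ k ih =>
    intro hk
    rw [h k hk, ih (Nat.le_of_succ_le hk), pow_succ]
    noncomm_ring

theorem piecewise_affine_coeffs_general (n : ℕ) (q A B : ℕ → ℝ) (f : ℝ → ℝ)
    (hq : ∀ i ≤ n, q i < q (i + 1))
    (hpiece : ∀ i ≤ n, ∀ x ∈ Set.Icc (q i) (q (i + 1)), f x = A i * x + B i)
    (hint : ∀ i ≤ n, (∫ y in (q i)..(q (i + 1)), (f y - y)) = 0) :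
    ∀ i ≤ n,
      A i - 1 = (-1 : ℝ) ^ i * ((q 1 - q 0) / (q (i + 1) - q i)) * (A 0 - 1) ∧
      B i = (-1 : ℝ) ^ (i + 1) * ((q (i + 1) + q i) / 2) *
          ((q 1 - q 0) / (q (i + 1) - q i)) * (A 0 - 1) := by
  have hpieceInt : ∀ i ≤ n, ∫ y in (q i)..(q (i + 1)), (A i * y + B i - y) = 0 := by
    intro i hi
    rw [← hint i hi]
    refine intervalIntegral.integral_congr fun y hy => ?_
    rw [Set.uIcc_of_le (hq i hi).le] at hy
    simp only [hpiece i hi y hy]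
  have hslope : ∀ i ≤ n, (A i - 1) * (q (i + 1) - q i) =
      (-1) ^ i * ((A 0 - 1) * (q 1 - q 0)) := by
    refine eq_neg_one_pow_mul_of_succ_eq_neg fun i hi => ?_
    refine slope_sub_one_mul_length_eq_neg (hq i hi.le).ne (hq (i + 1) hi).ne
      (hpieceInt i hi.le) (hpieceInt (i + 1) hi) ?_
    rw [← hpiece i hi.le _ ⟨(hq i hi.le).le, le_rfl⟩,
      ← hpiece (i + 1) hi _ ⟨le_rfl, (hq (i + 1) hi).le⟩]
  intro i hi
  have hlen : q (i + 1) - q i ≠ 0 := (sub_pos.mpr (hq i hi)).ne'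
  constructor
  · field_simp
    linear_combination hslope i hi
  · rw [intercept_eq_of_integral_mul_add_sub_id_eq_zero (hq i hi).ne (hpieceInt i hi)]
    field_simp
    linear_combination (-(q (i + 1) + q i)) * hslope i hi

theorem piecewise_affine_coeffs (n : ℕ) (q A B : ℕ → ℝ) (f : ℝ → ℝ)
    (hq : ∀ i ≤ n, q i < q (i + 1)) (hq' : q n < q (n + 1))
    (hf : ContinuousOn f (Set.Icc (q 0) (q (n + 1))))
    (hpiece : ∀ i ≤ n, ∀ x ∈ Set.Icc (q i) (q (i + 1)), f x = A i * x + B i)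
    (hint : ∀ i ≤ n, (∫ y in (q i)..(q (i + 1)), (f y - y)) = 0) :
    ∀ i ≤ n,
      A i - 1 = (-1 : ℝ) ^ i * ((q 1 - q 0) / (q (i + 1) - q i)) * (A 0 - 1) ∧
      B i = (-1 : ℝ) ^ (i + 1) * ((q (i + 1) + q i) / 2) *
          ((q 1 - q 0) / (q (i + 1) - q i)) * (A 0 - 1) :=
  piecewise_affine_coeffs_general n q A B f hq hpiece hint
end

section
/- Let $n\in\mathbb{N}_0$ and $q_0<q_1<\dots<q_{n+1}$, and let $f:[q_0,q_{n+1}]\to\mathbb{R}$ be continuous with $f(x)=A_ix+B_i$ on each $[q_i,q_{i+1}]$ and $\int_{q_i}^{q_{i+1}}(f(y)-y)\,dy=0$ for all $i$. If moreover $\int_{q_0}^{q_{n+1}} x(f(x)-x)\,dx = 0$, then $(A_0-1)\sum_{i=0}^{n}(-1)^i(q_{i+1}-q_i)^2 = 0$. -/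
theorem piecewise_affine_first_moment (n : ℕ) (q A B : ℕ → ℝ) (f : ℝ → ℝ)
    (hq : ∀ i ≤ n, q i < q (i + 1)) (hq' : q n < q (n + 1))
    (hf : ContinuousOn f (Set.Icc (q 0) (q (n + 1))))
    (hpiece : ∀ i ≤ n, ∀ x ∈ Set.Icc (q i) (q (i + 1)), f x = A i * x + B i)
    (hint : ∀ i ≤ n, (∫ y in (q i)..(q (i + 1)), (f y - y)) = 0)
    (hmom : (∫ x in (q 0)..(q (n + 1)), x * (f x - x)) = 0) :
    (A 0 - 1) * ∑ i ∈ Finset.range (n + 1), (-1 : ℝ) ^ i * (q (i + 1) - q i) ^ 2 = 0 := by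
  -- basic integral formulas
  have lin : ∀ (c d p r : ℝ), (∫ x in p..r, (c * x + d)) = c * (r^2 - p^2)/2 + d * (r - p) := by
    intro c d p r
    rw [intervalIntegral.integral_add (by apply Continuous.intervalIntegrable; continuity)
      intervalIntegrable_const,
      intervalIntegral.integral_const_mul, integral_id, intervalIntegral.integral_const]
    simp [smul_eq_mul]; ring
  have quad : ∀ (c d p r : ℝ),
      (∫ x in p..r, x * (c * x + d)) = c * (r^3 - p^3)/3 + d * (r^2 - p^2)/2 := by
    intro c d p r
    have h : (fun x : ℝ => x * (c * x + d)) = fun x => c * x^2 + d * x := by funext x; ring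
    rw [h, intervalIntegral.integral_add (by apply Continuous.intervalIntegrable; continuity)
      (by apply Continuous.intervalIntegrable; continuity),
      intervalIntegral.integral_const_mul, intervalIntegral.integral_const_mul]
    rw [integral_id, integral_pow]
    norm_num; ring
  -- f equals the affine map on each uIcc
  have hIcc : ∀ i ≤ n, Set.uIcc (q i) (q (i+1)) = Set.Icc (q i) (q (i+1)) := by
    intro i hi; exact Set.uIcc_of_le (le_of_lt (hq i hi))
  -- B i in terms of A i
  have hB : ∀ i ≤ n, B i = -((A i - 1) * (q i + q (i+1)))/2 := by
    intro i hi
    have h0 := hint i hi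
    have hcg : (∫ y in (q i)..(q (i+1)), (f y - y))
        = ∫ y in (q i)..(q (i+1)), ((A i - 1) * y + B i) := by
      apply intervalIntegral.integral_congr
      intro x hx
      rw [hIcc i hi] at hx
      show f x - x = _
      rw [hpiece i hi x hx]; ring
    rw [hcg, lin] at h0
    have hne : q (i+1) - q i ≠ 0 := by have := hq i hi; linarith
    have : (B i + (A i - 1) * (q i + q (i+1))/2) * (q (i+1) - q i) = 0 := by
      linear_combination h0
    rcases mul_eq_zero.mp this with h | h
    · linarith
    · exact absurd h hne
  -- continuity at interior knots (directly from hpiece)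
  have hcont : ∀ i, i + 1 ≤ n →
      A i * q (i+1) + B i = A (i+1) * q (i+1) + B (i+1) := by
    intro i hi
    have h1 : f (q (i+1)) = A i * q (i+1) + B i :=
      hpiece i (le_trans (Nat.le_succ i) hi) _ ⟨le_of_lt (hq i (le_trans (Nat.le_succ i) hi)), le_refl _⟩
    have h2 : f (q (i+1)) = A (i+1) * q (i+1) + B (i+1) :=
      hpiece (i+1) hi _ ⟨le_refl _, le_of_lt (hq (i+1) hi)⟩
    rw [h1] at h2; exact h2
  -- recursion for a i * h i
  have hrec : ∀ i, i + 1 ≤ n →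
      (A (i+1) - 1) * (q (i+2) - q (i+1)) = -((A i - 1) * (q (i+1) - q i)) := by
    intro i hi
    have h1 := hcont i hi
    have hb1 := hB i (le_trans (Nat.le_succ i) hi)
    have hb2 := hB (i+1) hi
    rw [hb1, hb2] at h1
    linarith [h1]
  have hpow : ∀ i ≤ n, (A i - 1) * (q (i+1) - q i)
      = (-1)^i * ((A 0 - 1) * (q 1 - q 0)) := by
    intro i
    induction i with
    | zero => intro _; simp
    | succ k ih =>
      intro hk
      have hk' : k ≤ n := le_trans (Nat.le_succ k) hk
      rw [hrec k hk, ih hk']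
      ring
  -- integrability on each piece
  have hint' : ∀ i ≤ n, IntervalIntegrable (fun x => x * (f x - x)) MeasureTheory.volume (q i) (q (i+1)) := by
    intro i hi
    apply ContinuousOn.intervalIntegrable
    rw [hIcc i hi]
    have hfc : ContinuousOn f (Set.Icc (q i) (q (i+1))) := by
      apply ContinuousOn.congr (f := fun x => A i * x + B i)
      · exact ((continuous_const.mul continuous_id).add continuous_const).continuousOn
      · intro x hx; exact hpiece i hi x hx
    exact (continuousOn_id.mul (hfc.sub continuousOn_id))
  -- split the moment integral
  have hsplit := intervalIntegral.sum_integral_adjacent_intervals (f := fun x => x * (f x - x))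
    (a := q) (n := n + 1) (by
      intro i hi
      exact hint' i (Nat.lt_succ_iff.mp hi))
  have hmom2 : (∑ k ∈ Finset.range (n+1), ∫ x in (q k)..(q (k+1)), x * (f x - x)) = 0 :=
    hsplit.trans hmom
  -- value of each piece integral
  have hval : ∀ i ≤ n, (∫ x in (q i)..(q (i+1)), x * (f x - x))
      = (-1)^i * ((A 0 - 1) * (q 1 - q 0)) * (q (i+1) - q i)^2 / 12 := by
    intro i hi
    have hcg : (∫ x in (q i)..(q (i+1)), x * (f x - x))
        = ∫ x in (q i)..(q (i+1)), x * ((A i - 1) * x + B i) := by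
      apply intervalIntegral.integral_congr
      intro x hx
      rw [hIcc i hi] at hx
      show x * (f x - x) = _
      rw [hpiece i hi x hx]; ring
    rw [hcg, quad, hB i hi]
    have h2 := hpow i hi
    have : (A i - 1) * (q (i+1)^3 - q i^3)/3
        + (-((A i - 1) * (q i + q (i+1)))/2) * (q (i+1)^2 - q i^2)/2
        = ((A i - 1) * (q (i+1) - q i)) * (q (i+1) - q i)^2 / 12 := by ring
    rw [this, h2]
  have hsum : ∑ i ∈ Finset.range (n+1), (∫ x in (q i)..(q (i+1)), x * (f x - x))
      = ((A 0 - 1) * (q 1 - q 0) / 12) *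
        ∑ i ∈ Finset.range (n+1), (-1:ℝ)^i * (q (i+1) - q i)^2 := by
    rw [Finset.mul_sum]
    apply Finset.sum_congr rfl
    intro i hi
    rw [hval i (Nat.lt_succ_iff.mp (Finset.mem_range.mp hi))]
    ring
  rw [hsum] at hmom2
  rcases mul_eq_zero.mp hmom2 with h | h
  · have hne : q 1 - q 0 ≠ 0 := by have := hq 0 (Nat.zero_le n); linarith
    have h12 : (A 0 - 1) * (q 1 - q 0) = 0 := by linarith
    rcases mul_eq_zero.mp h12 with h' | h'
    · rw [h']; ring
    · exact absurd h' hne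
  · rw [h]; ring
end

section
/- Let $n\in\mathbb{N}_0$ and $q_0<q_1<\dots<q_{n+1}$, and let $f:[q_0,q_{n+1}]\to\mathbb{R}$ be continuous piecewise affine with $f(x)=A_ix+B_i$ on $[q_i,q_{i+1}]$ and $\int_{q_i}^{q_{i+1}}(f(y)-y)\,dy=0$ for all $i$. If there exists some $i$ with $A_i=1$ and $B_i=0$, then $A_i=1$ and $B_i=0$ for all $i\in\{0,\dots,n\}$, i.e. $f$ is the identity on $[q_0,q_{n+1}]$. -/
open intervalIntegral in

private lemma key_affine (a b A B : ℝ) (hab : a < b)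
    (hI : (∫ y in a..b, (A * y + B - y)) = 0)
    (c : ℝ) (hc : c = a ∨ c = b) (hend : A * c + B = c) : A = 1 ∧ B = 0 := by
  have heq : (fun y => A * y + B - y) = (fun y => (A - 1) * y + B) := by
    funext y; ring
  rw [heq] at hI
  have h1 : (∫ y in a..b, ((A - 1) * y + B))
      = (A - 1) * ((b ^ 2 - a ^ 2) / 2) + B * (b - a) := by
    rw [intervalIntegral.integral_add ((intervalIntegrable_id).const_mul _)
      (intervalIntegrable_const), intervalIntegral.integral_const_mul,
      integral_id, intervalIntegral.integral_const, smul_eq_mul]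
    ring
  rw [h1] at hI
  have hba : b - a ≠ 0 := sub_ne_zero.mpr hab.ne'
  have h2 : (A - 1) * ((a + b) / 2) + B = 0 := by
    have : ((A - 1) * ((a + b) / 2) + B) * (b - a) = 0 := by
      rw [← hI]; ring
    rcases mul_eq_zero.mp this with h | h
    · exact h
    · exact absurd h hba
  have h3 : (A - 1) * c + B = 0 := by linarith [hend]
  have h4 : (A - 1) * ((a + b) / 2 - c) = 0 := by linarith [h2, h3]
  have hA : A = 1 := by
    rcases mul_eq_zero.mp h4 with h | h
    · linarith [sub_eq_zero.mp h]
    · rcases hc with rfl | rfl <;> [skip; skip] <;> exfalso <;> nlinarith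
  refine ⟨hA, ?_⟩
  rw [hA] at h3; linarith

theorem piecewise_affine_identity_propagates (n : ℕ) (q A B : ℕ → ℝ) (f : ℝ → ℝ)
    (hq : ∀ i ≤ n, q i < q (i + 1)) (hq' : q n < q (n + 1))
    (hf : ContinuousOn f (Set.Icc (q 0) (q (n + 1))))
    (hpiece : ∀ i ≤ n, ∀ x ∈ Set.Icc (q i) (q (i + 1)), f x = A i * x + B i)
    (hint : ∀ i ≤ n, (∫ y in (q i)..(q (i + 1)), (f y - y)) = 0)
    (hex : ∃ i ≤ n, A i = 1 ∧ B i = 0) :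
    ∀ i ≤ n, A i = 1 ∧ B i = 0 := by
  -- integral condition in affine form
  have hintA : ∀ j ≤ n, (∫ y in (q j)..(q (j + 1)), (A j * y + B j - y)) = 0 := by
    intro j hj
    rw [← hint j hj]
    apply intervalIntegral.integral_congr
    intro y hy
    rw [Set.uIcc_of_le (hq j hj).le] at hy
    simp [hpiece j hj y hy]
  -- endpoint values
  have hleft : ∀ j ≤ n, f (q j) = A j * q j + B j := by
    intro j hj
    exact hpiece j hj (q j) ⟨le_refl _, (hq j hj).le⟩
  have hright : ∀ j ≤ n, f (q (j + 1)) = A j * q (j + 1) + B j := by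
    intro j hj
    exact hpiece j hj (q (j + 1)) ⟨(hq j hj).le, le_refl _⟩
  obtain ⟨i0, hi0, hAi0, hBi0⟩ := hex
  -- forward propagation
  have fwd : ∀ d, i0 + d ≤ n → A (i0 + d) = 1 ∧ B (i0 + d) = 0 := by
    intro d
    induction d with
    | zero => intro _; exact ⟨hAi0, hBi0⟩
    | succ k ih =>
      intro hk
      have hk' : i0 + k ≤ n := by omega
      obtain ⟨hA1, hB1⟩ := ih hk'
      have hj : i0 + (k + 1) = (i0 + k) + 1 := by ring
      rw [hj] at hk ⊢
      have hmatch : A ((i0 + k) + 1) * q ((i0 + k) + 1) + B ((i0 + k) + 1)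
          = q ((i0 + k) + 1) := by
        rw [← hleft _ hk, hright _ hk', hA1, hB1]; ring
      exact key_affine _ _ _ _ (hq _ hk) (hintA _ hk) _ (Or.inl rfl) hmatch
  -- backward propagation
  have bwd : ∀ d, d ≤ i0 → A (i0 - d) = 1 ∧ B (i0 - d) = 0 := by
    intro d
    induction d with
    | zero => intro _; exact ⟨hAi0, hBi0⟩
    | succ k ih =>
      intro hk
      have hk' : k ≤ i0 := by omega
      obtain ⟨hA1, hB1⟩ := ih hk'
      set j := i0 - (k + 1) with hjdef
      have hjn : j ≤ n := by omega
      have hjk : j + 1 = i0 - k := by omega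
      have hjk' : j + 1 ≤ n := by omega
      have hmatch : A j * q (j + 1) + B j = q (j + 1) := by
        rw [← hright _ hjn, hjk, hleft _ (by omega : i0 - k ≤ n), hA1, hB1]; ring
      exact key_affine _ _ _ _ (hq _ hjn) (hintA _ hjn) _ (Or.inr rfl) hmatch
  intro i hi
  rcases le_or_gt i0 i with h | h
  · have := fwd (i - i0) (by omega)
    rwa [Nat.add_sub_cancel' h] at this
  · have := bwd (i0 - i) (by omega)
    rwa [Nat.sub_sub_self h.le] at this
end

section
/- Let $n\in\mathbb{N}_0$ and $q_0<q_1<\dots<q_{n+1}$, and let $f:[q_0,q_{n+1}]\to\mathbb{R}$ be continuous piecewise affine with $f(x)=A_ix+B_i$ on $[q_i,q_{i+1}]$ and $\int_{q_i}^{q_{i+1}}(f(y)-y)\,dy=0$ for all $i$. Then for all $i\in\{0,\dots,n\}$, $\mathrm{sign}(A_i-1)=(-1)^i\,\mathrm{sign}(A_0-1)$. -/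
lemma aux_integral (a b C D : ℝ) :
    (∫ y in a..b, (C * y + D - y)) = (C - 1) * (b ^ 2 - a ^ 2) / 2 + D * (b - a) := by
  have h1 : IntervalIntegrable (fun y : ℝ => (C - 1) * y) MeasureTheory.volume a b :=
    (continuous_const.mul continuous_id).intervalIntegrable _ _
  have h2 : IntervalIntegrable (fun _ : ℝ => D) MeasureTheory.volume a b :=
    intervalIntegrable_const
  have hfun : (fun y : ℝ => C * y + D - y) = fun y : ℝ => (C - 1) * y + D := by
    funext y; ring
  rw [hfun, intervalIntegral.integral_add h1 h2, intervalIntegral.integral_const_mul,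
    integral_id, intervalIntegral.integral_const, smul_eq_mul]
  ring

lemma sign_step {a b c d : ℝ} (hc : 0 < c) (hd : 0 < d) (h : a * c = -(b * d)) :
    Real.sign b = -Real.sign a := by
  rcases lt_trichotomy a 0 with ha | ha | ha
  · have hb : 0 < b := by nlinarith
    rw [Real.sign_of_pos hb, Real.sign_of_neg ha]; ring
  · have hb : b = 0 := by nlinarith
    simp [ha, hb]
  · have hb : b < 0 := by nlinarith
    rw [Real.sign_of_neg hb, Real.sign_of_pos ha]

theorem piecewise_affine_sign_alternates (n : ℕ) (q A B : ℕ → ℝ) (f : ℝ → ℝ)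
    (hq : ∀ i ≤ n, q i < q (i + 1)) (hq' : q n < q (n + 1))
    (hf : ContinuousOn f (Set.Icc (q 0) (q (n + 1))))
    (hpiece : ∀ i ≤ n, ∀ x ∈ Set.Icc (q i) (q (i + 1)), f x = A i * x + B i)
    (hint : ∀ i ≤ n, (∫ y in (q i)..(q (i + 1)), (f y - y)) = 0) :
    ∀ i ≤ n, Real.sign (A i - 1) = (-1 : ℝ) ^ i * Real.sign (A 0 - 1) := by
  -- first, compute B j from the integral condition
  have hB : ∀ j ≤ n, B j = -((A j - 1) * (q j + q (j + 1)) / 2) := by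
    intro j hj
    have hlt := hq j hj
    have hieq : (∫ y in (q j)..(q (j + 1)), (f y - y))
        = ∫ y in (q j)..(q (j + 1)), (A j * y + B j - y) := by
      apply intervalIntegral.integral_congr
      intro x hx
      rw [Set.uIcc_of_le hlt.le] at hx
      simp only
      rw [hpiece j hj x hx]
    have h0 := hint j hj
    rw [hieq, aux_integral] at h0
    have hne : q (j + 1) - q j ≠ 0 := sub_ne_zero.mpr hlt.ne'
    field_simp
    nlinarith [sq_nonneg (q (j+1) - q j), h0]
  intro i
  induction i with
  | zero => intro _; simp
  | succ j ih =>
    intro hj1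
    have hjn : j ≤ n := Nat.le_of_succ_le hj1
    have e1 : f (q (j + 1)) = A j * q (j + 1) + B j :=
      hpiece j hjn _ ⟨(hq j hjn).le, le_refl _⟩
    have e2 : f (q (j + 1)) = A (j + 1) * q (j + 1) + B (j + 1) :=
      hpiece (j + 1) hj1 _ ⟨le_refl _, (hq (j + 1) hj1).le⟩
    have hBj := hB j hjn
    have hBj1 := hB (j + 1) hj1
    have key : (A j - 1) * (q (j + 1) - q j) =
        -((A (j + 1) - 1) * (q (j + 2) - q (j + 1))) := by
      have := e1.symm.trans e2
      rw [hBj, hBj1] at this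
      linarith [this]
    have hs := sign_step (sub_pos.mpr (hq j hjn)) (sub_pos.mpr (hq (j + 1) hj1)) key
    rw [hs, ih hjn]
    ring
end

section
/- For every $\gamma\in(0,1)$, every $t\in(0,1)$, and every $\tau\in\{-1,1\}$, one has $\int_t^1 (x-t)(\tfrac{1}{2}-x)\,dx + \gamma^{\tau}\int_0^t (x-t)(\tfrac{1}{2}-x)\,dx = \tfrac{1}{12}\big(-1+(1-\gamma^{\tau})(3-2t)t^2\big)$, and this quantity is strictly negative. -/
/-!
Both integrals are elementary: on `[0, t]` the integral is `-(3 - 2t)t²/12`, and the integral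
over `[0, 1]` is `-1/12` for every `t`, since `1/2 - x` has mean zero there. Hence the sum equals
`(-1 + (1 - c)(3 - 2t)t²)/12` with `c = γ^τ > 0`, and it is negative because
`1 - (3 - 2t)t² = (1 - t)²(1 + 2t) ≥ 0`.
-/

lemma integral_sub_mul_half_sub (t a b : ℝ) :
    ∫ x in a..b, (x - t) * (1 / 2 - x) =
      (-b ^ 3 / 3 + (t + 1 / 2) * b ^ 2 / 2 - t / 2 * b) -
        (-a ^ 3 / 3 + (t + 1 / 2) * a ^ 2 / 2 - t / 2 * a) := by
  have hderiv : ∀ x ∈ Set.uIcc a b,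
      HasDerivAt (fun x : ℝ => -x ^ 3 / 3 + (t + 1 / 2) * x ^ 2 / 2 - t / 2 * x)
        ((x - t) * (1 / 2 - x)) x := by
    intro x _
    refine ((((hasDerivAt_pow 3 x).neg.div_const 3).add
      (((hasDerivAt_pow 2 x).const_mul (t + 1 / 2)).div_const 2)).sub
      ((hasDerivAt_id x).const_mul (t / 2))).congr_deriv ?_
    push_cast
    ring
  exact intervalIntegral.integral_eq_sub_of_hasDerivAt hderiv
    (Continuous.intervalIntegrable (by fun_prop) a b)

lemma integral_zero_to_sub_mul_half_sub (t : ℝ) :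
    ∫ x in (0 : ℝ)..t, (x - t) * (1 / 2 - x) = -((3 - 2 * t) * t ^ 2) / 12 := by
  rw [integral_sub_mul_half_sub]
  ring

lemma integral_to_one_sub_mul_half_sub (t : ℝ) :
    ∫ x in t..(1 : ℝ), (x - t) * (1 / 2 - x) = (-1 + (3 - 2 * t) * t ^ 2) / 12 := by
  rw [integral_sub_mul_half_sub]
  ring

lemma three_sub_two_mul_mul_sq_le_one {t : ℝ} (ht : -1 / 2 ≤ t) : (3 - 2 * t) * t ^ 2 ≤ 1 := by
  nlinarith [mul_nonneg (sq_nonneg (1 - t)) (show 0 ≤ 1 + 2 * t by linarith)]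

lemma one_sub_mul_lt_one {c s : ℝ} (hc : 0 < c) (hs₀ : 0 ≤ s) (hs₁ : s ≤ 1) :
    (1 - c) * s < 1 := by
  nlinarith [mul_nonneg hc.le hs₀]

theorem leaky_flat_type2_integral_general (γ t : ℝ) (hγ : γ ∈ Set.Ioo (0:ℝ) 1)
    (ht : t ∈ Set.Ioo (0:ℝ) 1) (τ : ℤ) :
    (∫ x in t..(1:ℝ), (x - t) * (1 / 2 - x)) +
        γ ^ τ * ∫ x in (0:ℝ)..t, (x - t) * (1 / 2 - x) =
      1 / 12 * (-1 + (1 - γ ^ τ) * (3 - 2 * t) * t ^ 2) ∧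
    (∫ x in t..(1:ℝ), (x - t) * (1 / 2 - x)) +
        γ ^ τ * ∫ x in (0:ℝ)..t, (x - t) * (1 / 2 - x) < 0 := by
  obtain ⟨ht₀, ht₁⟩ := ht
  have hsum : (∫ x in t..(1:ℝ), (x - t) * (1 / 2 - x)) +
      γ ^ τ * ∫ x in (0:ℝ)..t, (x - t) * (1 / 2 - x) =
        1 / 12 * (-1 + (1 - γ ^ τ) * (3 - 2 * t) * t ^ 2) := by
    rw [integral_to_one_sub_mul_half_sub, integral_zero_to_sub_mul_half_sub]
    ring
  have hlt : (1 - γ ^ τ) * ((3 - 2 * t) * t ^ 2) < 1 :=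
    one_sub_mul_lt_one (zpow_pos hγ.1 τ) (by nlinarith)
      (three_sub_two_mul_mul_sq_le_one (by linarith))
  refine ⟨hsum, ?_⟩
  rw [hsum]
  linarith

theorem leaky_flat_type2_integral (γ t : ℝ) (hγ : γ ∈ Set.Ioo (0:ℝ) 1)
    (ht : t ∈ Set.Ioo (0:ℝ) 1) (τ : ℤ) (hτ : τ = -1 ∨ τ = 1) :
    (∫ x in t..(1:ℝ), (x - t) * (1 / 2 - x)) +
        γ ^ τ * ∫ x in (0:ℝ)..t, (x - t) * (1 / 2 - x) =
      1 / 12 * (-1 + (1 - γ ^ τ) * (3 - 2 * t) * t ^ 2) ∧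
    (∫ x in t..(1:ℝ), (x - t) * (1 / 2 - x)) +
        γ ^ τ * ∫ x in (0:ℝ)..t, (x - t) * (1 / 2 - x) < 0 :=
  leaky_flat_type2_integral_general γ t hγ ht τ
end

section
/- Let $\phi\in\mathbb{R}^{3N+1}$ be a parameter of a shallow ReLU network with realization $f_\phi$, and define the loss $\mathcal{L}(\psi)=\int_0^1(f_\psi(x)-x)^2\,dx$. If $f_\phi(x)=x$ for all $x\in[0,1]$, then $\mathcal{L}$ is (Fréchet) differentiable at $\phi$ with derivative zero. -/
/-- Realization of a shallow ReLU network with `N` hidden neurons. -/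
noncomputable def reluNet (N : ℕ)
    (ψ : (Fin N → ℝ) × (Fin N → ℝ) × (Fin N → ℝ) × ℝ) (x : ℝ) : ℝ :=
  ψ.2.2.2 + ∑ j, ψ.2.2.1 j * max (ψ.1 j * x + ψ.2.1 j) 0

/-- The squared `L²`-loss against the identity target on `[0,1]`. -/
noncomputable def reluLoss (N : ℕ)
    (ψ : (Fin N → ℝ) × (Fin N → ℝ) × (Fin N → ℝ) × ℝ) : ℝ :=
  ∫ x in (0:ℝ)..1, (reluNet N ψ x - x) ^ 2

lemma reluNet_cont (N : ℕ) (ψ : (Fin N → ℝ) × (Fin N → ℝ) × (Fin N → ℝ) × ℝ) :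
    Continuous (reluNet N ψ) := by
  unfold reluNet
  fun_prop

lemma reluNet_lip (N : ℕ) (φ ψ : (Fin N → ℝ) × (Fin N → ℝ) × (Fin N → ℝ) × ℝ)
    (h1 : ‖ψ - φ‖ ≤ 1) {x : ℝ} (hx : x ∈ Set.Icc (0:ℝ) 1) :
    |reluNet N ψ x - reluNet N φ x| ≤
      (1 + ∑ j, (|φ.1 j| + |φ.2.1 j| + 2 * |φ.2.2.1 j| + 2)) * ‖ψ - φ‖ := by
  obtain ⟨hx0, hx1⟩ := hx
  have hd0 : (0:ℝ) ≤ ‖ψ - φ‖ := norm_nonneg _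
  have hw : ∀ j, |ψ.1 j - φ.1 j| ≤ ‖ψ - φ‖ := fun j => by
    have h1 := norm_le_pi_norm (ψ - φ).1 j
    have h2 : ‖(ψ - φ).1‖ ≤ ‖ψ - φ‖ := norm_fst_le _
    simpa using h1.trans h2
  have hb : ∀ j, |ψ.2.1 j - φ.2.1 j| ≤ ‖ψ - φ‖ := fun j => by
    have h1 := norm_le_pi_norm (ψ - φ).2.1 j
    have h2 : ‖(ψ - φ).2.1‖ ≤ ‖(ψ - φ).2‖ := norm_fst_le _
    have h3 : ‖(ψ - φ).2‖ ≤ ‖ψ - φ‖ := norm_snd_le _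
    simpa using h1.trans (h2.trans h3)
  have hv : ∀ j, |ψ.2.2.1 j - φ.2.2.1 j| ≤ ‖ψ - φ‖ := fun j => by
    have h1 := norm_le_pi_norm (ψ - φ).2.2.1 j
    have h2 : ‖(ψ - φ).2.2.1‖ ≤ ‖(ψ - φ).2.2‖ := norm_fst_le _
    have h3 : ‖(ψ - φ).2.2‖ ≤ ‖(ψ - φ).2‖ := norm_snd_le _
    have h4 : ‖(ψ - φ).2‖ ≤ ‖ψ - φ‖ := norm_snd_le _
    simpa using h1.trans (h2.trans (h3.trans h4))
  have hc : |ψ.2.2.2 - φ.2.2.2| ≤ ‖ψ - φ‖ := by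
    have h2 : |(ψ - φ).2.2.2| ≤ ‖(ψ - φ).2.2‖ := by
      simpa using (norm_snd_le ((ψ - φ).2.2))
    have h3 : ‖(ψ - φ).2.2‖ ≤ ‖(ψ - φ).2‖ := norm_snd_le _
    have h4 : ‖(ψ - φ).2‖ ≤ ‖ψ - φ‖ := norm_snd_le _
    simpa using h2.trans (h3.trans h4)
  have key : ∀ j, |ψ.2.2.1 j * max (ψ.1 j * x + ψ.2.1 j) 0
      - φ.2.2.1 j * max (φ.1 j * x + φ.2.1 j) 0|
      ≤ (|φ.1 j| + |φ.2.1 j| + 2 * |φ.2.2.1 j| + 2) * ‖ψ - φ‖ := by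
    intro j
    set Mψ := max (ψ.1 j * x + ψ.2.1 j) 0 with hMψ
    set Mφ := max (φ.1 j * x + φ.2.1 j) 0 with hMφ
    have hMφ_nonneg : 0 ≤ Mφ := le_max_right _ _
    have hMφ_le : Mφ ≤ |φ.1 j| + |φ.2.1 j| := by
      apply max_le _ (by positivity)
      calc φ.1 j * x + φ.2.1 j ≤ |φ.1 j * x| + |φ.2.1 j| := by
            have := le_abs_self (φ.1 j * x)
            have := le_abs_self (φ.2.1 j)
            linarith
        _ ≤ |φ.1 j| + |φ.2.1 j| := by
            rw [abs_mul]
            nlinarith [abs_nonneg (φ.1 j), abs_nonneg x, abs_of_nonneg hx0]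
    have hMdiff : |Mψ - Mφ| ≤ 2 * ‖ψ - φ‖ := by
      calc |Mψ - Mφ| ≤ |(ψ.1 j * x + ψ.2.1 j) - (φ.1 j * x + φ.2.1 j)| :=
            abs_max_sub_max_le_abs _ _ _
        _ = |(ψ.1 j - φ.1 j) * x + (ψ.2.1 j - φ.2.1 j)| := by ring_nf
        _ ≤ |(ψ.1 j - φ.1 j) * x| + |ψ.2.1 j - φ.2.1 j| := abs_add_le _ _
        _ ≤ |ψ.1 j - φ.1 j| + |ψ.2.1 j - φ.2.1 j| := by
            rw [abs_mul]
            nlinarith [abs_nonneg (ψ.1 j - φ.1 j), abs_of_nonneg hx0, hw j]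
        _ ≤ 2 * ‖ψ - φ‖ := by linarith [hw j, hb j]
    have hvψ : |ψ.2.2.1 j| ≤ |φ.2.2.1 j| + 1 := by
      have := abs_sub_abs_le_abs_sub (ψ.2.2.1 j) (φ.2.2.1 j)
      linarith [hv j]
    calc |ψ.2.2.1 j * Mψ - φ.2.2.1 j * Mφ|
        = |(ψ.2.2.1 j - φ.2.2.1 j) * Mφ + ψ.2.2.1 j * (Mψ - Mφ)| := by ring_nf
      _ ≤ |(ψ.2.2.1 j - φ.2.2.1 j) * Mφ| + |ψ.2.2.1 j * (Mψ - Mφ)| := abs_add_le _ _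
      _ = |ψ.2.2.1 j - φ.2.2.1 j| * |Mφ| + |ψ.2.2.1 j| * |Mψ - Mφ| := by
          rw [abs_mul, abs_mul]
      _ ≤ (|φ.1 j| + |φ.2.1 j| + 2 * |φ.2.2.1 j| + 2) * ‖ψ - φ‖ := by
          rw [abs_of_nonneg hMφ_nonneg]
          nlinarith [hv j, abs_nonneg (ψ.2.2.1 j), abs_nonneg (Mψ - Mφ),
            abs_nonneg (ψ.2.2.1 j - φ.2.2.1 j), abs_nonneg (φ.2.2.1 j)]
  have hsplit : reluNet N ψ x - reluNet N φ x
      = (ψ.2.2.2 - φ.2.2.2) + ∑ j, (ψ.2.2.1 j * max (ψ.1 j * x + ψ.2.1 j) 0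
        - φ.2.2.1 j * max (φ.1 j * x + φ.2.1 j) 0) := by
    simp [reluNet, Finset.sum_sub_distrib]
    ring
  calc |reluNet N ψ x - reluNet N φ x|
      ≤ |ψ.2.2.2 - φ.2.2.2| + |∑ j, (ψ.2.2.1 j * max (ψ.1 j * x + ψ.2.1 j) 0
        - φ.2.2.1 j * max (φ.1 j * x + φ.2.1 j) 0)| := by rw [hsplit]; exact abs_add_le _ _
    _ ≤ ‖ψ - φ‖ + ∑ j, (|φ.1 j| + |φ.2.1 j| + 2 * |φ.2.2.1 j| + 2) * ‖ψ - φ‖ := by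
        exact add_le_add hc ((Finset.abs_sum_le_sum_abs _ _).trans
            (Finset.sum_le_sum fun j _ => key j))
    _ = (1 + ∑ j, (|φ.1 j| + |φ.2.1 j| + 2 * |φ.2.2.1 j| + 2)) * ‖ψ - φ‖ := by
        rw [← Finset.sum_mul]; ring

theorem reluLoss_differentiable_at_global_min (N : ℕ)
    (φ : (Fin N → ℝ) × (Fin N → ℝ) × (Fin N → ℝ) × ℝ)
    (hφ : ∀ x ∈ Set.Icc (0:ℝ) 1, reluNet N φ x = x) :
    HasFDerivAt (reluLoss N) (0 : ((Fin N → ℝ) × (Fin N → ℝ) × (Fin N → ℝ) × ℝ) →L[ℝ] ℝ) φ := by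
  set K : ℝ := 1 + ∑ j, (|φ.1 j| + |φ.2.1 j| + 2 * |φ.2.2.1 j| + 2) with hK
  have hK1 : 1 ≤ K := by
    have : (0:ℝ) ≤ ∑ j, (|φ.1 j| + |φ.2.1 j| + 2 * |φ.2.2.1 j| + 2) :=
      Finset.sum_nonneg fun j _ => by positivity
    linarith
  have hKpos : 0 < K := lt_of_lt_of_le one_pos hK1
  have hL0 : reluLoss N φ = 0 := by
    rw [reluLoss]
    rw [intervalIntegral.integral_congr (g := fun _ => (0:ℝ))]
    · simp
    · intro x hx
      rw [Set.uIcc_of_le (by norm_num : (0:ℝ) ≤ 1)] at hx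
      simp [hφ x hx]
  -- bound: for ‖ψ - φ‖ ≤ 1, reluLoss N ψ ≤ K^2 * ‖ψ - φ‖^2
  have hbound : ∀ ψ, ‖ψ - φ‖ ≤ 1 → reluLoss N ψ ≤ K ^ 2 * ‖ψ - φ‖ ^ 2 := by
    intro ψ h1
    have hInt : IntervalIntegrable (fun x => (reluNet N ψ x - x) ^ 2)
        MeasureTheory.volume 0 1 :=
      (((reluNet_cont N ψ).sub continuous_id).pow 2).intervalIntegrable 0 1
    have : reluLoss N ψ ≤ ∫ _ in (0:ℝ)..1, K ^ 2 * ‖ψ - φ‖ ^ 2 := by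
      rw [reluLoss]
      apply intervalIntegral.integral_mono_on (by norm_num) hInt
        (intervalIntegrable_const)
      intro x hx
      have hlip := reluNet_lip N φ ψ h1 hx
      have heq : reluNet N ψ x - x = reluNet N ψ x - reluNet N φ x := by
        rw [hφ x hx]
      rw [heq]
      calc (reluNet N ψ x - reluNet N φ x) ^ 2
          = |reluNet N ψ x - reluNet N φ x| ^ 2 := (sq_abs _).symm
        _ ≤ (K * ‖ψ - φ‖) ^ 2 := by
            apply pow_le_pow_left₀ (abs_nonneg _) hlip
        _ = K ^ 2 * ‖ψ - φ‖ ^ 2 := by ring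
    simpa using this
  have hnonneg : ∀ ψ, 0 ≤ reluLoss N ψ := fun ψ =>
    intervalIntegral.integral_nonneg (by norm_num) (fun x _ => sq_nonneg _)
  rw [hasFDerivAt_iff_isLittleO_nhds_zero, Asymptotics.isLittleO_iff]
  intro ε hε
  have hδ : 0 < min 1 (ε / K ^ 2) := lt_min one_pos (by positivity)
  filter_upwards [Metric.ball_mem_nhds 0 hδ] with h hh
  rw [Metric.mem_ball, dist_zero_right] at hh
  have hne : ‖φ + h - φ‖ = ‖h‖ := by simp
  have h1 : ‖φ + h - φ‖ ≤ 1 := by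
    rw [hne]; exact le_of_lt (lt_of_lt_of_le hh (min_le_left _ _))
  have h2 : ‖h‖ ≤ ε / K ^ 2 := le_of_lt (lt_of_lt_of_le hh (min_le_right _ _))
  have hb := hbound (φ + h) h1
  rw [hne] at hb
  simp only [hL0, ContinuousLinearMap.zero_apply, sub_zero]
  rw [Real.norm_eq_abs, abs_of_nonneg (hnonneg (φ + h))]
  calc reluLoss N (φ + h) ≤ K ^ 2 * ‖h‖ ^ 2 := hb
    _ = (K ^ 2 * ‖h‖) * ‖h‖ := by ring
    _ ≤ (K ^ 2 * (ε / K ^ 2)) * ‖h‖ := by gcongr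
    _ = ε * ‖h‖ := by field_simp
    _ ≤ ε * ‖h‖ := le_refl _
end

section
/- Fix $n\in\{2,4,6,\dots\}$ and define $f:[0,1]\to\mathbb{R}$ by $f(x)=x-\frac{(-1)^i}{n+1}\big(x-\frac{i+1/2}{n+1}\big)$ for $x\in[\frac{i}{n+1},\frac{i+1}{n+1}]$, $i\in\{0,\dots,n\}$. Then $f$ is well-defined and continuous, $\int_{i/(n+1)}^{(i+1)/(n+1)}(f(x)-x)\,dx=0$ for every $i$, and $\int_0^1 x(f(x)-x)\,dx=-\frac{1}{12(n+1)^4}\neq 0$. -/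
/-!
`f` is the identity plus a triangle wave of period `2/(n+1)` and amplitude `1/(2(n+1)^2)`, which
makes continuity automatic. On the `i`-th piece `f x - x` is a multiple of `x - mᵢ`, `mᵢ` the
midpoint, so it integrates to zero, while `∫ x (x - mᵢ) = h³/12` with `h = 1/(n+1)`. The signs
`(-1)^i` of the pieces alternate, and their sum over `i ≤ n` is `1` because `n` is even.
-/

open intervalIntegral Set

noncomputable def triangleWave (s : ℝ) : ℝ := |2 * Int.fract (s / 2) - 1|

theorem continuous_triangleWave : Continuous triangleWave :=
  have hwave : Continuous ((fun y : ℝ => |2 * y - 1|) ∘ Int.fract) :=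
    ContinuousOn.comp_fract'' (by fun_prop) (by norm_num)
  hwave.comp (continuous_id.div_const 2)

-- At the right endpoint `Int.fract y = 0`, but both sides equal `1` there.
theorem abs_two_mul_fract_sub_one_eq {k : ℤ} {y : ℝ} (hy : y ∈ Icc (k : ℝ) (k + 1)) :
    |2 * Int.fract y - 1| = |2 * (y - k) - 1| := by
  rcases hy.2.lt_or_eq with hlt | rfl
  · rw [show Int.fract y = y - k from
      Int.fract_eq_iff.mpr ⟨by linarith [hy.1], by linarith, k, by ring⟩]
  · rw [show (k : ℝ) + 1 = ((k + 1 : ℤ) : ℝ) by push_cast; ring, Int.fract_intCast]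
    push_cast
    norm_num

theorem triangleWave_eq_of_mem_Icc {i : ℕ} {s : ℝ} (hs : s ∈ Icc (i : ℝ) (i + 1)) :
    triangleWave s = 1 / 2 - (-1) ^ i * (s - i - 1 / 2) := by
  obtain ⟨hs₁, hs₂⟩ := hs
  rcases Nat.even_or_odd' i with ⟨k, rfl | rfl⟩
  · have hk : s / 2 ∈ Icc ((k : ℤ) : ℝ) ((k : ℤ) + 1) := by
      push_cast at hs₁ hs₂ ⊢; constructor <;> linarith
    rw [triangleWave, abs_two_mul_fract_sub_one_eq hk, abs_of_nonpos (by push_cast at *; linarith),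
      Even.neg_one_pow ⟨k, two_mul k⟩]
    push_cast; ring
  · have hk : s / 2 ∈ Icc ((k : ℤ) : ℝ) ((k : ℤ) + 1) := by
      push_cast at hs₁ hs₂ ⊢; constructor <;> linarith
    rw [triangleWave, abs_two_mul_fract_sub_one_eq hk, abs_of_nonneg (by push_cast at *; linarith),
      Odd.neg_one_pow ⟨k, rfl⟩]
    push_cast; ring

theorem sum_range_neg_one_pow_of_even {R : Type*} [Ring R] {n : ℕ} (hn : Even n) :
    ∑ i ∈ Finset.range (n + 1), (-1 : R) ^ i = 1 := by
  rw [neg_one_geom_sum, if_neg (Nat.not_even_iff_odd.mpr hn.add_one)]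

theorem integral_sub_midpoint (a b : ℝ) : ∫ x in a..b, (x - (a + b) / 2) = 0 := by
  simp [integral_sub]; ring

theorem integral_mul_sub_midpoint (a b : ℝ) :
    ∫ x in a..b, x * (x - (a + b) / 2) = (b - a) ^ 3 / 12 := by
  simp [mul_sub, integral_sub, intervalIntegrable_id.mul_const, ← sq, integral_pow]; ring

noncomputable def saddleRealization (n : ℕ) (x : ℝ) : ℝ :=
  x + (triangleWave ((n + 1) * x) - 1 / 2) / ((n : ℝ) + 1) ^ 2

theorem continuous_saddleRealization (n : ℕ) : Continuous (saddleRealization n) := by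
  unfold saddleRealization
  have := continuous_triangleWave
  fun_prop

section Pieces

variable {n i : ℕ}

theorem saddleRealization_sub_self_of_mem_Icc {x : ℝ}
    (hx : x ∈ Icc ((i : ℝ) / (n + 1)) (((i : ℝ) + 1) / (n + 1))) :
    saddleRealization n x - x =
      -((-1) ^ i / (n + 1)) * (x - ((i : ℝ) / (n + 1) + ((i : ℝ) + 1) / (n + 1)) / 2) := by
  have hN : (0 : ℝ) < n + 1 := by positivity
  have hs : (n + 1) * x ∈ Icc (i : ℝ) (i + 1) := by
    obtain ⟨hx₁, hx₂⟩ := hx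
    rw [div_le_iff₀' hN] at hx₁
    rw [le_div_iff₀' hN] at hx₂
    exact ⟨hx₁, hx₂⟩
  rw [saddleRealization, triangleWave_eq_of_mem_Icc hs]
  field_simp
  ring

theorem integral_saddleRealization_sub_self_piece :
    ∫ x in ((i : ℝ) / (n + 1))..(((i : ℝ) + 1) / (n + 1)), (saddleRealization n x - x) = 0 := by
  have hle : (i : ℝ) / (n + 1) ≤ ((i : ℝ) + 1) / (n + 1) := by gcongr; linarith
  rw [integral_congr fun x hx => saddleRealization_sub_self_of_mem_Icc (uIcc_of_le hle ▸ hx),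
    integral_const_mul, integral_sub_midpoint, mul_zero]

theorem integral_mul_saddleRealization_sub_self_piece :
    ∫ x in ((i : ℝ) / (n + 1))..(((i : ℝ) + 1) / (n + 1)), x * (saddleRealization n x - x) =
      -(-1) ^ i / (12 * ((n : ℝ) + 1) ^ 4) := by
  have hle : (i : ℝ) / (n + 1) ≤ ((i : ℝ) + 1) / (n + 1) := by gcongr; linarith
  rw [integral_congr fun x hx => by
      rw [saddleRealization_sub_self_of_mem_Icc (uIcc_of_le hle ▸ hx), mul_left_comm],
    integral_const_mul, integral_mul_sub_midpoint]
  field_simp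
  ring

end Pieces

theorem integral_mul_saddleRealization_sub_self {n : ℕ} (hn : Even n) :
    ∫ x in (0 : ℝ)..1, x * (saddleRealization n x - x) = -1 / (12 * ((n : ℝ) + 1) ^ 4) := by
  have hN : ((n : ℝ) + 1) ≠ 0 := by positivity
  have hsplit := sum_integral_adjacent_intervals (a := fun k : ℕ => (k : ℝ) / (n + 1))
    (n := n + 1) (μ := MeasureTheory.volume) (f := fun x => x * (saddleRealization n x - x)) fun k _ =>
      (continuous_id.mul ((continuous_saddleRealization n).sub continuous_id)).intervalIntegrable _ _
  simp only [Nat.cast_add_one, Nat.cast_zero, zero_div, div_self hN] at hsplit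
  rw [← hsplit, Finset.sum_congr rfl fun i _ => integral_mul_saddleRealization_sub_self_piece,
    ← Finset.sum_div, Finset.sum_neg_distrib, sum_range_neg_one_pow_of_even hn]

theorem saddle_realization_exists_general (n : ℕ) (hne : Even n) :
    ∃ f : ℝ → ℝ, ContinuousOn f (Set.Icc (0:ℝ) 1) ∧
      (∀ i ≤ n, ∀ x ∈ Set.Icc ((i : ℝ) / (n + 1)) (((i : ℝ) + 1) / (n + 1)),
        f x = x - (-1 : ℝ) ^ i / (n + 1) * (x - ((i : ℝ) + 1 / 2) / (n + 1))) ∧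
      (∀ i ≤ n,
        (∫ x in ((i : ℝ) / (n + 1))..(((i : ℝ) + 1) / (n + 1)), (f x - x)) = 0) ∧
      (∫ x in (0:ℝ)..1, x * (f x - x)) = -1 / (12 * ((n : ℝ) + 1) ^ 4) ∧
      (-1 / (12 * ((n : ℝ) + 1) ^ 4) : ℝ) ≠ 0 := by
  refine ⟨saddleRealization n, (continuous_saddleRealization n).continuousOn,
    fun i _ x hx => ?_, fun i _ => integral_saddleRealization_sub_self_piece,
    integral_mul_saddleRealization_sub_self hne, by positivity⟩
  have hpiece := saddleRealization_sub_self_of_mem_Icc hx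
  linear_combination hpiece

theorem saddle_realization_exists (n : ℕ) (hn2 : 2 ≤ n) (hne : Even n) :
    ∃ f : ℝ → ℝ, ContinuousOn f (Set.Icc (0:ℝ) 1) ∧
      (∀ i ≤ n, ∀ x ∈ Set.Icc ((i : ℝ) / (n + 1)) (((i : ℝ) + 1) / (n + 1)),
        f x = x - (-1 : ℝ) ^ i / (n + 1) * (x - ((i : ℝ) + 1 / 2) / (n + 1))) ∧
      (∀ i ≤ n,
        (∫ x in ((i : ℝ) / (n + 1))..(((i : ℝ) + 1) / (n + 1)), (f x - x)) = 0) ∧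
      (∫ x in (0:ℝ)..1, x * (f x - x)) = -1 / (12 * ((n : ℝ) + 1) ^ 4) ∧
      (-1 / (12 * ((n : ℝ) + 1) ^ 4) : ℝ) ≠ 0 :=
  saddle_realization_exists_general n hne
end

section
/- For $n\in\{2,4,6,\dots\}$ and $q_i=\frac{i}{n+1}$, the function $g(x)=\frac{1}{2}+\frac{2}{n+1}\sum_{i=1}^{n}(-1)^{i+1}\max\{(-1)^{i+1}(x-q_i),0\}$ satisfies $g(x)=x-\frac{(-1)^i}{n+1}\big(x-\frac{i+1/2}{n+1}\big)$ for all $i\in\{0,\dots,n\}$ and all $x\in[q_i,q_{i+1}]$ (with $q_0=0$, $q_{n+1}=1$). -/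
/-!
On `[q i, q (i+1)]` the sign of `x - q j` is known for every breakpoint, so the `j`-th neuron
`(-1)^(j+1) max((-1)^(j+1) (x - q j), 0)` is either `x - q j` or `0`: it is active exactly when
`j ≤ i` is odd or `j > i` is even. The network is therefore affine on that interval. For `i = 0`
the active neurons are the even ones and the affine map is computed directly; passing from `i` to
`i + 1` switches neuron `i + 1` on or off, which changes the sum by `(-1)^i (x - q (i+1))`, matching
the change of the right-hand side.
-/

open Finset

lemma neg_one_pow_mul_max_neg_one_pow_mul {R : Type*} [Ring R] [LinearOrder R] [IsOrderedRing R]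
    (k : ℕ) (y : R) :
    (-1 : R) ^ k * max ((-1) ^ k * y) 0 = if Even k then max y 0 else min y 0 := by
  rcases Nat.even_or_odd k with hk | hk
  · rw [hk.neg_one_pow, if_pos hk, one_mul, one_mul]
  · rw [hk.neg_one_pow, if_neg (Nat.not_even_iff_odd.mpr hk), neg_one_mul, neg_one_mul,
      ← neg_zero, max_neg_neg, neg_neg, neg_zero]

/-- The output of neuron `j` on the piece `[q i, q (i+1)]` of the network with breakpoints
`q j = j / (n + 1)`. -/
noncomputable def activeNeuron (n i j : ℕ) (x : ℝ) : ℝ :=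
  if (Odd j ∧ j ≤ i) ∨ (Even j ∧ i < j) then x - j / (n + 1) else 0

lemma neuron_eq_activeNeuron {n i : ℕ} {x : ℝ}
    (hx : x ∈ Set.Icc ((i : ℝ) / (n + 1)) ((i + 1 : ℕ) / (n + 1))) (j : ℕ) :
    (-1 : ℝ) ^ (j + 1) * max ((-1) ^ (j + 1) * (x - j / (n + 1))) 0 = activeNeuron n i j x := by
  simp only [neg_one_pow_mul_max_neg_one_pow_mul, activeNeuron, Nat.even_iff, Nat.odd_iff]
  by_cases hji : j ≤ i
  · have hjx : (j : ℝ) / (n + 1) ≤ x := le_trans (by gcongr) hx.1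
    rw [max_eq_left (sub_nonneg.mpr hjx), min_eq_right (sub_nonneg.mpr hjx)]
    exact if_congr (by omega) rfl rfl
  · have hxj : x ≤ (j : ℝ) / (n + 1) := hx.2.trans (by gcongr; omega)
    rw [max_eq_right (sub_nonpos.mpr hxj), min_eq_left (sub_nonpos.mpr hxj), ← ite_not]
    exact if_congr (by omega) rfl rfl

lemma sum_ite_even_sub {K : Type*} [Field K] (M : ℕ) (x c : K) :
    ∑ j ∈ Icc 1 (2 * M), (if Even j then x - j / c else 0) = M * x - M * (M + 1) / c := by
  induction M with
  | zero => simp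
  | succ M ih =>
    rw [show 2 * (M + 1) = 2 * M + 1 + 1 by ring, sum_Icc_succ_top (by omega),
      sum_Icc_succ_top (by omega), ih, if_neg (by simp), if_pos (by simp [Nat.even_add_one])]
    push_cast
    ring

lemma activeNeuron_succ (n i j : ℕ) (x : ℝ) :
    activeNeuron n (i + 1) j x = activeNeuron n i j x +
      if j = i + 1 then (-1) ^ i * (x - (i + 1 : ℕ) / (n + 1)) else 0 := by
  unfold activeNeuron
  by_cases hj : j = i + 1
  · subst hj
    rcases Nat.even_or_odd i with hi | hi <;> simp [hi.add_one, hi.neg_one_pow]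
  · have hle : j ≤ i + 1 ↔ j ≤ i := by omega
    have hlt : i + 1 < j ↔ i < j := by omega
    simp only [hle, hlt, hj, if_false, add_zero]

lemma sum_activeNeuron {n : ℕ} (hn : Even n) {i : ℕ} (hi : i ≤ n) (x : ℝ) :
    ∑ j ∈ Icc 1 n, activeNeuron n i j x =
      (n + 1) / 2 * (x - 1 / 2) - (-1) ^ i / 2 * (x - (i + 1 / 2) / (n + 1)) := by
  induction i with
  | zero =>
    obtain ⟨M, rfl⟩ := hn.two_dvd
    have heven : ∀ j ∈ Icc 1 (2 * M), activeNeuron (2 * M) 0 j x =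
        if Even j then x - j / ((2 * M : ℕ) + 1 : ℝ) else 0 := by
      intro j hj
      have hj0 : 0 < j := (mem_Icc.mp hj).1
      unfold activeNeuron
      exact if_congr (by simp only [Nat.even_iff, Nat.odd_iff]; omega) rfl rfl
    rw [sum_congr rfl heven, sum_ite_even_sub]
    field_simp
    push_cast
    ring
  | succ i ih =>
    have hmem : i + 1 ∈ Icc 1 n := mem_Icc.mpr ⟨by omega, hi⟩
    rw [sum_congr rfl (fun j _ => activeNeuron_succ n i j x), sum_add_distrib, sum_ite_eq',
      if_pos hmem, ih (by omega)]
    push_cast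
    ring

theorem saddle_realization_as_relu_net_general (n : ℕ) (hne : Even n)
    (q : ℕ → ℝ) (hq : ∀ i, q i = (i : ℝ) / (n + 1)) :
    ∀ i ≤ n, ∀ x ∈ Set.Icc (q i) (q (i + 1)),
      (1 / 2 + 2 / ((n : ℝ) + 1) *
          ∑ j ∈ Finset.Icc 1 n, (-1 : ℝ) ^ (j + 1) * max ((-1 : ℝ) ^ (j + 1) * (x - q j)) 0)
        = x - (-1 : ℝ) ^ i / (n + 1) * (x - ((i : ℝ) + 1 / 2) / (n + 1)) := by
  obtain rfl : q = fun i : ℕ => (i : ℝ) / (n + 1) := funext hq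
  intro i hi x hx
  rw [sum_congr rfl (fun j _ => neuron_eq_activeNeuron hx j), sum_activeNeuron hne hi]
  field_simp
  ring

theorem saddle_realization_as_relu_net (n : ℕ) (hn2 : 2 ≤ n) (hne : Even n)
    (q : ℕ → ℝ) (hq : ∀ i, q i = (i : ℝ) / (n + 1)) :
    ∀ i ≤ n, ∀ x ∈ Set.Icc (q i) (q (i + 1)),
      (1 / 2 + 2 / ((n : ℝ) + 1) *
          ∑ j ∈ Finset.Icc 1 n, (-1 : ℝ) ^ (j + 1) * max ((-1 : ℝ) ^ (j + 1) * (x - q j)) 0)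
        = x - (-1 : ℝ) ^ i / (n + 1) * (x - ((i : ℝ) + 1 / 2) / (n + 1)) :=
  saddle_realization_as_relu_net_general n hne q hq
end

section
/- For parameters $v_j,w_j\in\mathbb{R}$, define $a^s=(v_j-s)(w_j-s)$ and $g(s)=\tfrac{1}{3}a^s(a^s+1)s^3-\tfrac{1}{2}a^s s^2$ for $s\in[0,1]$. If $w_j\le 0$ and $v_j\le 0$, then $g(s)<0$ for all sufficiently small $s>0$; more precisely, $g(s)=-\tfrac{1}{2}v_jw_js^2+O(s^3)$ if $w_j\neq 0\neq v_j$, $g(s)=-\tfrac12|v_j+w_j|s^3+O(s^4)$ if exactly one of $v_j,w_j$ is zero, and $g(s)=-\tfrac12 s^4+O(s^5)$ if $v_j=w_j=0$. -/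
open Asymptotics

private lemma poly_mul_bigO (p : ℝ → ℝ) (hp : Continuous p) (k : ℕ) :
    (fun s : ℝ => p s * s ^ k) =O[nhdsWithin 0 (Set.Ioi 0)] (fun s : ℝ => s ^ k) := by
  have h1 : p =O[nhds (0:ℝ)] (fun _ : ℝ => (1:ℝ)) :=
    hp.continuousAt.isBigO_one ℝ
  have h2 := h1.mul (isBigO_refl (fun s : ℝ => s ^ k) (nhds (0:ℝ)))
  simp only [one_mul] at h2
  exact h2.mono nhdsWithin_le_nhds

theorem semi_inactive_perturbation_expansion (v w : ℝ) (g : ℝ → ℝ)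
    (hg : ∀ s : ℝ, g s = 1 / 3 * ((v - s) * (w - s)) * ((v - s) * (w - s) + 1) * s ^ 3
        - 1 / 2 * ((v - s) * (w - s)) * s ^ 2)
    (hw : w ≤ 0) (hv : v ≤ 0) :
    (∃ δ > 0, ∀ s ∈ Set.Ioo (0:ℝ) δ, g s < 0) ∧
    (w ≠ 0 → v ≠ 0 →
      (fun s => g s - (-(1 / 2) * v * w * s ^ 2)) =O[nhdsWithin 0 (Set.Ioi 0)]
        fun s : ℝ => s ^ 3) ∧
    ((w ≠ 0 ∧ v = 0) ∨ (w = 0 ∧ v ≠ 0) →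
      (fun s => g s - (-(1 / 2) * |v + w| * s ^ 3)) =O[nhdsWithin 0 (Set.Ioi 0)]
        fun s : ℝ => s ^ 4) ∧
    (w = 0 → v = 0 →
      (fun s => g s - (-(1 / 2) * s ^ 4)) =O[nhdsWithin 0 (Set.Ioi 0)]
        fun s : ℝ => s ^ 5) := by
  refine ⟨?_, ?_, ?_, ?_⟩
  · -- negativity for small s
    set M : ℝ := (|v| + 1) * (|w| + 1) + 1 with hM
    have hMpos : 0 < M := by positivity
    refine ⟨min 1 (1 / M), lt_min one_pos (by positivity), ?_⟩
    rintro s ⟨hs0, hsδ⟩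
    have hs1 : s < 1 := lt_of_lt_of_le hsδ (min_le_left _ _)
    have hsM : s < 1 / M := lt_of_lt_of_le hsδ (min_le_right _ _)
    have hvs : v - s < 0 := by linarith
    have hws : w - s < 0 := by linarith
    have hA : 0 < (v - s) * (w - s) := mul_pos_of_neg_of_neg hvs hws
    have hv1 : -(|v| + 1) ≤ v - s := by
      have := neg_abs_le v; linarith
    have hw1 : -(|w| + 1) ≤ w - s := by
      have := neg_abs_le w; linarith
    have hAle : (v - s) * (w - s) ≤ (|v| + 1) * (|w| + 1) := by
      nlinarith
    have hfac : (1 / 3) * ((v - s) * (w - s) + 1) * s - 1 / 2 < 0 := by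
      have hMs : M * s < 1 := by
        rw [lt_div_iff₀ hMpos] at hsM; linarith
      nlinarith
    have key : g s = ((v - s) * (w - s)) * s ^ 2 *
        ((1 / 3) * ((v - s) * (w - s) + 1) * s - 1 / 2) := by
      rw [hg]; ring
    rw [key]
    exact mul_neg_of_pos_of_neg (mul_pos hA (pow_pos hs0 2)) hfac
  · intro _ _
    have heq : (fun s => g s - (-(1 / 2) * v * w * s ^ 2))
        = fun s : ℝ => (1 / 3 * ((v - s) * (w - s)) * ((v - s) * (w - s) + 1)
            + 1 / 2 * (v + w) - 1 / 2 * s) * s ^ 3 := by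
      funext s; rw [hg]; ring
    rw [heq]
    exact poly_mul_bigO _ (by fun_prop) 3
  · rintro (⟨hw0, hv0⟩ | ⟨hw0, hv0⟩)
    · have habs : |v + w| = -(v + w) := abs_of_nonpos (by linarith)
      have heq : (fun s => g s - (-(1 / 2) * |v + w| * s ^ 3))
          = fun s : ℝ => (1 / 3 * (s - w) * ((v - s) * (w - s) + 1) - 1 / 2) * s ^ 4 := by
        funext s; rw [hg, habs, hv0]; ring
      rw [heq]
      exact poly_mul_bigO _ (by fun_prop) 4
    · have habs : |v + w| = -(v + w) := abs_of_nonpos (by linarith)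
      have heq : (fun s => g s - (-(1 / 2) * |v + w| * s ^ 3))
          = fun s : ℝ => (1 / 3 * (s - v) * ((v - s) * (w - s) + 1) - 1 / 2) * s ^ 4 := by
        funext s; rw [hg, habs, hw0]; ring
      rw [heq]
      exact poly_mul_bigO _ (by fun_prop) 4
  · intro hw0 hv0
    have heq : (fun s => g s - (-(1 / 2) * s ^ 4))
        = fun s : ℝ => (1 / 3 * (s ^ 2 + 1)) * s ^ 5 := by
      funext s; rw [hg, hw0, hv0]; ring
    rw [heq]
    exact poly_mul_bigO _ (by fun_prop) 5
end

section
/- For all $w,b\in\mathbb{R}$ with $w\neq 0$, one has $\inf_{(v,c)\in\mathbb{R}^2}\int_{T_0}^{T_1}\big(c+v(wx+b)^2-\alpha x-\beta\big)^2 dx = \frac{1}{12}\alpha^2(T_1-T_0)^3\Big(1-\frac{60 d^2}{(T_1-T_0)^2+60 d^2}\Big)$, where $d=\frac{T_0+T_1}{2}+\frac{b}{w}$; in particular this infimum tends to $0$ as $|d|\to\infty$ but is strictly positive for every fixed $(w,b)$. -/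
/-!
Write `L = T1 - T0`, `m = (T0 + T1) / 2` and `d = m + b / w`. In the variable `t = x - m` the error
`c + v (w x + b)^2 - α x - β` is a quadratic `p t^2 + q t + r` with `p = v w^2` and `q = 2 v w^2 d - α`,
and on the symmetric interval the odd moments vanish, so its squared `L²` norm is
`p^2 L^5 / 180 + q^2 L^3 / 12 + L (r + p L^2 / 12)^2`. The constant `c` only enters `r`, so the last
term can be made zero; with `u = v w` the rest is `L^3 / 12 * (a u^2 + (2 w d u - α)^2)` where
`a = L^2 w^2 / 15 > 0`, a one-variable quadratic with minimum `a α^2 / (a + 4 w^2 d^2) > 0`.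
-/

open Filter

theorem integral_sq_quadratic_sub_midpoint (p q r T0 T1 : ℝ) :
    ∫ x in T0..T1, (p * (x - (T0 + T1) / 2) ^ 2 + q * (x - (T0 + T1) / 2) + r) ^ 2 =
      p ^ 2 * (T1 - T0) ^ 5 / 180 + q ^ 2 * (T1 - T0) ^ 3 / 12
        + (T1 - T0) * (r + p * (T1 - T0) ^ 2 / 12) ^ 2 := by
  rw [intervalIntegral.integral_comp_sub_right (fun t => (p * t ^ 2 + q * t + r) ^ 2)]
  have hexpand : (fun t : ℝ => (p * t ^ 2 + q * t + r) ^ 2) = fun t =>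
      p ^ 2 * t ^ 4 + 2 * p * q * t ^ 3 + (q ^ 2 + 2 * p * r) * t ^ 2 + 2 * q * r * t ^ 1
        + r ^ 2 := by
    funext t
    ring
  rw [hexpand]
  simp (disch := apply Continuous.intervalIntegrable; fun_prop) only [integral_pow,
    intervalIntegral.integral_add, intervalIntegral.integral_const_mul,
    intervalIntegral.integral_const, smul_eq_mul]
  ring

theorem isLeast_mul_sq_add_sub_sq {a : ℝ} (ha : 0 < a) (k α : ℝ) :
    IsLeast (Set.range fun u => a * u ^ 2 + (k * u - α) ^ 2) (a * α ^ 2 / (a + k ^ 2)) := by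
  have hpos : 0 < a + k ^ 2 := by positivity
  refine ⟨⟨k * α / (a + k ^ 2), by field_simp; ring⟩, ?_⟩
  rintro _ ⟨u, rfl⟩
  rw [div_le_iff₀ hpos]
  nlinarith [sq_nonneg ((a + k ^ 2) * u - k * α)]

theorem isLeast_integral_neuron_sq_error {T0 T1 w : ℝ} (α β b : ℝ) (hT : T0 < T1) (hw : w ≠ 0) :
    IsLeast {y : ℝ | ∃ v c : ℝ, y = ∫ x in T0..T1, (c + v * (w * x + b) ^ 2 - α * x - β) ^ 2}
      (1 / 12 * α ^ 2 * (T1 - T0) ^ 3 * ((T1 - T0) ^ 2 /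
        ((T1 - T0) ^ 2 + 60 * ((T0 + T1) / 2 + b / w) ^ 2))) := by
  set L := T1 - T0
  set m := (T0 + T1) / 2
  set d := m + b / w
  have hL : 0 < L := sub_pos.2 hT
  have hwd : w * d = w * m + b := by
    simp only [d]
    field_simp
  have hloss : ∀ v c, ∫ x in T0..T1, (c + v * (w * x + b) ^ 2 - α * x - β) ^ 2 =
      L ^ 3 / 12 * (L ^ 2 * w ^ 2 / 15 * (v * w) ^ 2 + (2 * w * d * (v * w) - α) ^ 2)
        + L * (c + v * (w * d) ^ 2 - α * m - β + v * w ^ 2 * L ^ 2 / 12) ^ 2 := by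
    intro v c
    have hcentered : (fun x => (c + v * (w * x + b) ^ 2 - α * x - β) ^ 2) = fun x =>
        (v * w ^ 2 * (x - m) ^ 2 + (2 * v * w * (w * d) - α) * (x - m)
          + (c + v * (w * d) ^ 2 - α * m - β)) ^ 2 := by
      funext x
      rw [hwd]
      ring
    rw [hcentered, integral_sq_quadratic_sub_midpoint]
    ring
  obtain ⟨⟨u, hu⟩, hmin⟩ :=
    isLeast_mul_sq_add_sub_sq (a := L ^ 2 * w ^ 2 / 15) (by positivity) (2 * w * d) α
  have hval : 1 / 12 * α ^ 2 * L ^ 3 * (L ^ 2 / (L ^ 2 + 60 * d ^ 2)) =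
      L ^ 3 / 12 * (L ^ 2 * w ^ 2 / 15 * α ^ 2 / (L ^ 2 * w ^ 2 / 15 + (2 * w * d) ^ 2)) := by
    field_simp
    ring
  rw [hval]
  constructor
  · refine ⟨u / w, α * m + β - u / w * (w * d) ^ 2 - u / w * w ^ 2 * L ^ 2 / 12, ?_⟩
    rw [hloss, div_mul_cancel₀ u hw, ← hu]
    ring
  · rintro _ ⟨v, c, rfl⟩
    rw [hloss]
    exact le_add_of_le_of_nonneg (by gcongr; exact hmin ⟨v * w, rfl⟩) (by positivity)

theorem tendsto_div_add_mul_sq_cocompact (C A : ℝ) {c : ℝ} (hc : 0 < c) :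
    Tendsto (fun d : ℝ => C / (A + c * d ^ 2)) (cocompact ℝ) (nhds 0) := by
  have hsq : Tendsto (fun d : ℝ => d ^ 2) (cocompact ℝ) atTop := by
    simpa [Function.comp_def, Real.norm_eq_abs, sq_abs] using
      (tendsto_pow_atTop two_ne_zero).comp (tendsto_norm_cocompact_atTop (E := ℝ))
  exact tendsto_const_nhds.div_atTop (tendsto_atTop_add_const_left _ A (hsq.const_mul_atTop hc))

theorem quad_single_neuron_inf (α β T0 T1 w b : ℝ) (hα : α ≠ 0) (hT : T0 < T1)
    (hw : w ≠ 0) :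
    sInf {y : ℝ | ∃ v c : ℝ,
        y = ∫ x in T0..T1, (c + v * (w * x + b) ^ 2 - α * x - β) ^ 2} =
      1 / 12 * α ^ 2 * (T1 - T0) ^ 3 *
        (1 - 60 * ((T0 + T1) / 2 + b / w) ^ 2 /
          ((T1 - T0) ^ 2 + 60 * ((T0 + T1) / 2 + b / w) ^ 2)) ∧
    0 < 1 / 12 * α ^ 2 * (T1 - T0) ^ 3 *
        (1 - 60 * ((T0 + T1) / 2 + b / w) ^ 2 /
          ((T1 - T0) ^ 2 + 60 * ((T0 + T1) / 2 + b / w) ^ 2)) ∧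
    Tendsto (fun d : ℝ => 1 / 12 * α ^ 2 * (T1 - T0) ^ 3 *
        (1 - 60 * d ^ 2 / ((T1 - T0) ^ 2 + 60 * d ^ 2)))
      (cocompact ℝ) (nhds 0) := by
  have hL : 0 < T1 - T0 := sub_pos.2 hT
  have hfrac : ∀ d : ℝ, 1 - 60 * d ^ 2 / ((T1 - T0) ^ 2 + 60 * d ^ 2) =
      (T1 - T0) ^ 2 / ((T1 - T0) ^ 2 + 60 * d ^ 2) := fun d => by
    rw [one_sub_div (by positivity), add_sub_cancel_right]
  simp only [hfrac]
  refine ⟨(isLeast_integral_neuron_sq_error α β b hT hw).csInf_eq, by positivity, ?_⟩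
  simpa only [mul_zero] using
    (tendsto_div_add_mul_sq_cocompact _ _ (by norm_num)).const_mul (1 / 12 * α ^ 2 * (T1 - T0) ^ 3)
end
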